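/- arXiv:2004.03108 — 2 statements merged into one kernel-verified Lean document; each statement's English description precedes it below -/
import Mathlib

section
/- Given Kμ < η P_h H t_0 with H = ‖h_r‖² > 0 and t_0 ∈ (0,1), the largest β ∈ [0,1] satisfying the energy-causality constraint Kμ ≤ η P_h (1 − β²) H t_0 is β* = √(1 − Kμ/(η P_h H t_0)); moreover β* is strictly increasing in t_0 and in P_h. -/
lemma sqrt_mono_aux (c D D' : ℝ) (hc : 0 < c) (hD : 0 < D) (hcD : c < D) (hDD : D < D') :
    Real.sqrt (1 - c / D) < Real.sqrt (1 - c / D') := by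
  apply Real.sqrt_lt_sqrt
  · have : c / D < 1 := (div_lt_one hD).mpr hcD
    linarith
  · have h1 : c / D' < c / D := div_lt_div_of_pos_left hc hD hDD
    linarith

/-- Proposition 4: `β* = √(1 − Kμ/(ηP_hH t0))` is the largest `β ∈ [0,1]` satisfying
`Kμ ≤ ηP_h(1−β²)H t0`; moreover `β*` is strictly increasing in `t0` and in `P_h`. -/
theorem stmt8 (K μ η H : ℝ) (hK : 0 < K) (hμ : 0 < μ) (hη : 0 < η) (hH : 0 < H) :
    let β := fun (Ph t0 : ℝ) => Real.sqrt (1 - K * μ / (η * Ph * H * t0))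
    (∀ Ph t0 : ℝ, 0 < Ph → t0 ∈ Set.Ioo (0:ℝ) 1 → K * μ < η * Ph * H * t0 →
      β Ph t0 ∈ Set.Icc (0:ℝ) 1 ∧
      K * μ ≤ η * Ph * (1 - β Ph t0 ^ 2) * H * t0 ∧
      ∀ b ∈ Set.Icc (0:ℝ) 1, K * μ ≤ η * Ph * (1 - b ^ 2) * H * t0 → b ≤ β Ph t0) ∧
    (∀ Ph t0 t0' : ℝ, 0 < Ph → t0 ∈ Set.Ioo (0:ℝ) 1 → t0' ∈ Set.Ioo (0:ℝ) 1 →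
      K * μ < η * Ph * H * t0 → t0 < t0' → β Ph t0 < β Ph t0') ∧
    (∀ Ph Ph' t0 : ℝ, 0 < Ph → t0 ∈ Set.Ioo (0:ℝ) 1 →
      K * μ < η * Ph * H * t0 → Ph < Ph' → β Ph t0 < β Ph' t0) := by
  intro β
  have hKμ : 0 < K * μ := mul_pos hK hμ
  refine ⟨?_, ?_, ?_⟩
  · intro Ph t0 hPh ht0 hlt
    have hD : 0 < η * Ph * H * t0 := lt_trans hKμ hlt
    have hfrac : 0 < K * μ / (η * Ph * H * t0) := div_pos hKμ hD
    have hfrac1 : K * μ / (η * Ph * H * t0) < 1 := (div_lt_one hD).mpr hlt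
    have harg : 0 ≤ 1 - K * μ / (η * Ph * H * t0) := by linarith
    have hsq : β Ph t0 ^ 2 = 1 - K * μ / (η * Ph * H * t0) := Real.sq_sqrt harg
    constructor
    · exact ⟨Real.sqrt_nonneg _, by
        rw [show (1:ℝ) = Real.sqrt 1 by simp]
        exact Real.sqrt_le_sqrt (by linarith)⟩
    constructor
    · rw [hsq]
      have : η * Ph * (1 - (1 - K * μ / (η * Ph * H * t0))) * H * t0
          = (K * μ / (η * Ph * H * t0)) * (η * Ph * H * t0) := by ring
      rw [this, div_mul_cancel₀ _ (ne_of_gt hD)]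
    · rintro b ⟨hb0, hb1⟩ hcon
      have hb2 : b ^ 2 ≤ 1 - K * μ / (η * Ph * H * t0) := by
        rw [le_sub_iff_add_le]
        have : K * μ / (η * Ph * H * t0) ≤ 1 - b ^ 2 :=
          (div_le_iff₀ hD).mpr (by nlinarith)
        linarith
      calc b = Real.sqrt (b ^ 2) := (Real.sqrt_sq hb0).symm
        _ ≤ β Ph t0 := Real.sqrt_le_sqrt (by linarith [hsq])
  · intro Ph t0 t0' hPh ht0 ht0' hlt htt
    have hD : 0 < η * Ph * H * t0 := lt_trans hKμ hlt
    exact sqrt_mono_aux (K * μ) (η * Ph * H * t0) (η * Ph * H * t0') hKμ hD hlt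
      (by nlinarith [mul_pos (mul_pos hη hPh) hH])
  · intro Ph Ph' t0 hPh ht0 hlt hPP
    have hD : 0 < η * Ph * H * t0 := lt_trans hKμ hlt
    exact sqrt_mono_aux (K * μ) (η * Ph * H * t0) (η * Ph' * H * t0) hKμ hD hlt
      (by nlinarith [mul_pos hη (mul_pos hH ht0.1)])
end

section
/- For t_0 ∈ (t_min, 1) with t_min = max{Kμ/(η P_h H), Kμ/P_sat}, define β*(t_0) = √(1 − Kμ/(η P_h H t_0)) and the total reflected-plus-direct received amplitude A(t_0) = √ρ β*(t_0) G + g for constants G, g, ρ > 0. Then the users' harvested energy before saturation, E(t_0) = η P_h (√ρ β*(t_0) G + g)² t_0, is strictly increasing in t_0 on (t_min, 1). -/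
/-- PS-scheme tradeoff: with `β*(t0) = √(1 − Kμ/(ηP_hH t0))`, the (unsaturated)
user harvested energy `E(t0) = ηP_h(√ρ β*(t0) G + g)² t0` is strictly increasing
on `(t_min, 1)` with `t_min = max{Kμ/(ηP_hH), Kμ/P_sat}`. -/
theorem stmt19 (K μ η Ph Psat H ρ G g : ℝ)
    (hK : 0 < K) (hμ : 0 < μ) (hη : 0 < η) (hPh : 0 < Ph) (hPsat : 0 < Psat)
    (hH : 0 < H) (hρ : 0 < ρ) (hG : 0 ≤ G) (hg : 0 < g) :
    StrictMonoOn
      (fun t0 => η * Ph *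
        (Real.sqrt ρ * Real.sqrt (1 - K * μ / (η * Ph * H * t0)) * G + g) ^ 2 * t0)
      (Set.Ioo (max (K * μ / (η * Ph * H)) (K * μ / Psat)) 1) := by
  intro a ha b hb hab
  have hden : 0 < η * Ph * H := by positivity
  have hKμ : 0 < K * μ := by positivity
  have ha0 : 0 < a := lt_trans (by positivity) (lt_of_le_of_lt (le_max_left _ _) ha.1)
  have hb0 : 0 < b := ha0.trans hab
  have hsle : K * μ / (η * Ph * H * b) ≤ K * μ / (η * Ph * H * a) := by
    apply div_le_div_of_nonneg_left hKμ.le (by positivity)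
    exact mul_le_mul_of_nonneg_left hab.le hden.le
  have hsub : 1 - K * μ / (η * Ph * H * a) ≤ 1 - K * μ / (η * Ph * H * b) := by linarith
  have hsq : Real.sqrt (1 - K * μ / (η * Ph * H * a)) ≤
      Real.sqrt (1 - K * μ / (η * Ph * H * b)) := Real.sqrt_le_sqrt hsub
  have hA : Real.sqrt ρ * Real.sqrt (1 - K * μ / (η * Ph * H * a)) * G + g ≤
      Real.sqrt ρ * Real.sqrt (1 - K * μ / (η * Ph * H * b)) * G + g := by
    have := mul_le_mul_of_nonneg_right
      (mul_le_mul_of_nonneg_left hsq (Real.sqrt_nonneg ρ)) hG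
    linarith
  have hApos : 0 < Real.sqrt ρ * Real.sqrt (1 - K * μ / (η * Ph * H * a)) * G + g := by
    have : 0 ≤ Real.sqrt ρ * Real.sqrt (1 - K * μ / (η * Ph * H * a)) * G := by positivity
    linarith
  have hsq2 : (Real.sqrt ρ * Real.sqrt (1 - K * μ / (η * Ph * H * a)) * G + g) ^ 2 ≤
      (Real.sqrt ρ * Real.sqrt (1 - K * μ / (η * Ph * H * b)) * G + g) ^ 2 :=
    pow_le_pow_left₀ hApos.le hA 2
  simp only
  have h1 : η * Ph * (Real.sqrt ρ * Real.sqrt (1 - K * μ / (η * Ph * H * a)) * G + g) ^ 2 ≤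
      η * Ph * (Real.sqrt ρ * Real.sqrt (1 - K * μ / (η * Ph * H * b)) * G + g) ^ 2 :=
    mul_le_mul_of_nonneg_left hsq2 (by positivity)
  have h2 : 0 < η * Ph * (Real.sqrt ρ * Real.sqrt (1 - K * μ / (η * Ph * H * a)) * G + g) ^ 2 := by
    positivity
  calc η * Ph * (Real.sqrt ρ * Real.sqrt (1 - K * μ / (η * Ph * H * a)) * G + g) ^ 2 * a
      < η * Ph * (Real.sqrt ρ * Real.sqrt (1 - K * μ / (η * Ph * H * a)) * G + g) ^ 2 * b :=
        (mul_lt_mul_iff_right₀ h2).2 hab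
    _ ≤ _ := mul_le_mul_of_nonneg_right h1 hb0.le
end
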